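/- Let T be an ε-critical tournament with |T| = n containing a smooth (c, λ, w)-structure (S_1,...,S_{|w|}), and suppose w(j) = 0, w(j+1) = 1, so that |S_j| ≥ cn and S_{j+1} induces a transitive tournament with |S_{j+1}| ≥ c·tr(T). Let P ⊆ S_{j+1} be any subset with |P| ≥ (c/h)·tr(T) for some h ≥ 1. If ε < log_{c/2}(1 − c/h), then the set S_j* = {x ∈ S_j : there exists v ∈ P with (v,x) ∈ E(T)} satisfies |S_j*| ≥ |S_j|/2 ≥ (c/2)n. -/

import Mathlib

open scoped Classical

def IsTournament {V : Type*} (E : V → V → Prop) : Prop :=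
  (∀ v, ¬ E v v) ∧ ∀ u v : V, u ≠ v → (E u v ↔ ¬ E v u)

def TransOn {V : Type*} (E : V → V → Prop) (s : Finset V) : Prop :=
  ∀ a ∈ s, ∀ b ∈ s, ∀ c ∈ s, E a b → E b c → E a c

noncomputable def trOn {V : Type*} (E : V → V → Prop) (A : Finset V) : ℕ :=
  A.powerset.sup fun s => if TransOn E s then s.card else 0

noncomputable def trT {V : Type*} (E : V → V → Prop) [Fintype V] : ℕ :=
  trOn E Finset.univ

def IsCritical {V : Type*} [Fintype V] (E : V → V → Prop) (ε : ℝ) : Prop :=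
  (trT E : ℝ) < (Fintype.card V : ℝ) ^ ε ∧
  ∀ A : Finset V, A ≠ Finset.univ → ((A.card : ℝ) ^ ε ≤ (trOn E A : ℝ))

noncomputable def dens {V : Type*} (E : V → V → Prop) (X Y : Finset V) : ℝ :=
  (((X ×ˢ Y).filter fun p => E p.1 p.2).card : ℝ) / ((X.card : ℝ) * (Y.card : ℝ))

def SmoothStruct {V : Type*} [Fintype V] (E : V → V → Prop) (c lam : ℝ) {m : ℕ}
    (w : Fin m → Bool) (S : Fin m → Finset V) : Prop :=
  (∀ i j : Fin m, i ≠ j → Disjoint (S i) (S j)) ∧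
  (∀ i, w i = false → c * (Fintype.card V : ℝ) ≤ ((S i).card : ℝ)) ∧
  (∀ i, w i = true → TransOn E (S i) ∧ c * (trT E : ℝ) ≤ ((S i).card : ℝ)) ∧
  (∀ i j : Fin m, i < j →
    (∀ v ∈ S i, 1 - lam ≤ dens E {v} (S j)) ∧ (∀ v ∈ S j, 1 - lam ≤ dens E (S i) {v}))

/-!
If more than half of `S_j` had no in-neighbour in `P`, those vertices would form a proper set `A`
with `|A| ≥ (c/2)n`, all of whose vertices beat all of `P`. A largest transitive subtournament of
`A` together with `P` is then transitive, so `tr(T) ≥ |A|^ε + |P| > (c/2)^ε tr(T) + (c/h) tr(T)`,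
which contradicts `1 - c/h < (c/2)^ε`, the content of the bound on `ε`.
-/

section Tournament

variable {V : Type*} {E : V → V → Prop}

def CompleteTo (E : V → V → Prop) (A B : Finset V) : Prop :=
  ∀ a ∈ A, ∀ b ∈ B, E a b ∧ ¬ E b a

theorem CompleteTo.mono_left {A A' B : Finset V} (h : CompleteTo E A B) (hA : A' ⊆ A) :
    CompleteTo E A' B :=
  fun a ha => h a (hA ha)

theorem CompleteTo.disjoint {A B : Finset V} (h : CompleteTo E A B) : Disjoint A B :=
  Finset.disjoint_left.2 fun {a} ha hb => (h a ha a hb).2 (h a ha a hb).1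

theorem completeTo_filter_not_exists (hT : IsTournament E) {S P : Finset V}
    (hSP : Disjoint S P) : CompleteTo E (S.filter fun x => ¬ ∃ v ∈ P, E v x) P := by
  intro y hy v hv
  rw [Finset.mem_filter] at hy
  have hyv : y ≠ v := by
    rintro rfl
    exact Finset.disjoint_left.1 hSP hy.1 hv
  have hvy : ¬ E v y := fun hvy => hy.2 ⟨v, hv, hvy⟩
  exact ⟨(hT.2 y v hyv).2 hvy, hvy⟩

theorem TransOn.mono {S P : Finset V} (hS : TransOn E S) (hP : P ⊆ S) : TransOn E P :=
  fun a ha b hb c hc => hS a (hP ha) b (hP hb) c (hP hc)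

theorem TransOn.union_of_completeTo {D P : Finset V} (hD : TransOn E D) (hP : TransOn E P)
    (hDP : CompleteTo E D P) : TransOn E (D ∪ P) := by
  intro a ha b hb c hc hab hbc
  rw [Finset.mem_union] at ha hb hc
  rcases ha with ha | ha
  · rcases hc with hc | hc
    · rcases hb with hb | hb
      · exact hD a ha b hb c hc hab hbc
      · exact absurd hbc (hDP c hc b hb).2
    · exact (hDP a ha c hc).1
  · rcases hb with hb | hb
    · exact absurd hab (hDP b hb a ha).2
    · rcases hc with hc | hc
      · exact absurd hbc (hDP c hc b hb).2
      · exact hP a ha b hb c hc hab hbc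

theorem exists_transOn_card_eq_trOn (E : V → V → Prop) (A : Finset V) :
    ∃ D ⊆ A, TransOn E D ∧ D.card = trOn E A := by
  obtain ⟨s, hs, hsup⟩ := Finset.exists_mem_eq_sup A.powerset ⟨∅, Finset.empty_mem_powerset A⟩
    fun s => if TransOn E s then s.card else 0
  by_cases hst : TransOn E s
  · exact ⟨s, Finset.mem_powerset.1 hs, hst, by rw [trOn, hsup, if_pos hst]⟩
  · refine ⟨∅, Finset.empty_subset A, by simp [TransOn], ?_⟩
    rw [trOn, hsup, if_neg hst, Finset.card_empty]

theorem card_le_trOn {A D : Finset V} (hDA : D ⊆ A) (hD : TransOn E D) :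
    D.card ≤ trOn E A := by
  have := Finset.le_sup (f := fun s => if TransOn E s then s.card else 0)
    (Finset.mem_powerset.2 hDA)
  rwa [if_pos hD] at this

variable [Fintype V]

theorem one_le_trT [Nonempty V] : 1 ≤ trT E := by
  obtain ⟨v⟩ := ‹Nonempty V›
  have hv : TransOn E {v} := by
    intro a ha b hb c hc hab _
    rw [Finset.mem_singleton] at ha hb hc
    subst ha hb hc
    exact hab
  exact card_le_trOn (Finset.subset_univ {v}) hv

theorem trOn_add_card_le_trT {A P : Finset V} (hP : TransOn E P) (hAP : CompleteTo E A P) :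
    trOn E A + P.card ≤ trT E := by
  obtain ⟨D, hDA, hD, hcard⟩ := exists_transOn_card_eq_trOn E A
  have hDP := hAP.mono_left hDA
  rw [← hcard, ← Finset.card_union_of_disjoint hDP.disjoint]
  exact card_le_trOn (Finset.subset_univ _) (hD.union_of_completeTo hP hDP)

theorem IsCritical.nonempty {ε : ℝ} (hcrit : IsCritical E ε) (hε : 0 < ε) : Nonempty V := by
  rw [← Fintype.card_pos_iff, Nat.pos_iff_ne_zero]
  intro hV
  have := hcrit.1
  rw [hV, Nat.cast_zero, Real.zero_rpow hε.ne'] at this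
  exact (Nat.cast_nonneg _).not_gt this

theorem IsCritical.rpow_lt_one_sub_of_completeTo {ε a f : ℝ} (hcrit : IsCritical E ε)
    (hε : 0 ≤ ε) (ha : 0 < a) {A P : Finset V} (hA : a * Fintype.card V ≤ A.card)
    (hAuniv : A ≠ Finset.univ) (hP : TransOn E P) (hPsize : f * trT E ≤ P.card)
    (hAP : CompleteTo E A P) : a ^ ε < 1 - f := by
  have hsum : (trOn E A : ℝ) + P.card ≤ trT E := by exact_mod_cast trOn_add_card_le_trT hP hAP
  have htr : (0 : ℝ) ≤ trT E := Nat.cast_nonneg _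
  refine lt_of_mul_lt_mul_right ?_ htr
  calc a ^ ε * trT E < a ^ ε * (Fintype.card V : ℝ) ^ ε :=
        mul_lt_mul_of_pos_left hcrit.1 (Real.rpow_pos_of_pos ha ε)
    _ = (a * Fintype.card V) ^ ε := (Real.mul_rpow ha.le (Nat.cast_nonneg _)).symm
    _ ≤ (A.card : ℝ) ^ ε := Real.rpow_le_rpow (by positivity) hA hε
    _ ≤ trOn E A := hcrit.2 A hAuniv
    _ ≤ (1 - f) * trT E := by linarith

end Tournament

theorem Real.lt_rpow_of_lt_logb {b x ε : ℝ} (hb0 : 0 < b) (hb1 : b < 1) (h : ε < Real.logb b x) :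
    x < b ^ ε := by
  rcases le_or_gt x 0 with hx | hx
  · exact hx.trans_lt (Real.rpow_pos_of_pos hb0 ε)
  · exact (Real.lt_logb_iff_rpow_lt_of_base_lt_one hb0 hb1 hx).1 h

theorem half_of_linear_set_beaten_general {V : Type*} [Fintype V] (E : V → V → Prop)
    (hT : IsTournament E) (ε c lam h : ℝ) (hε : 0 < ε) (hc : 0 < c)
    (hcrit : IsCritical E ε) {m : ℕ} (w : Fin m → Bool) (S : Fin m → Finset V)
    (hS : SmoothStruct E c lam w S) (j j' : Fin m)
    (hwj : w j = false) (hwj' : w j' = true)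
    (P : Finset V) (hP : P ⊆ S j')
    (hPsize : c / h * (trT E : ℝ) ≤ (P.card : ℝ))
    (hlog : ε < Real.logb (c / 2) (1 - c / h)) :
    ((S j).card : ℝ) / 2 ≤ (((S j).filter fun x => ∃ v ∈ P, E v x).card : ℝ) ∧
    c / 2 * (Fintype.card V : ℝ) ≤
      (((S j).filter fun x => ∃ v ∈ P, E v x).card : ℝ) := by
  obtain ⟨hdisj, hlarge, htrans, -⟩ := hS
  have hjj' : j ≠ j' := by
    rintro rfl
    simp [hwj] at hwj'
  have hne : Nonempty V := hcrit.nonempty hε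
  have hSj : c * Fintype.card V ≤ (S j).card := hlarge j hwj
  have hc1 : c ≤ 1 := by
    have : ((S j).card : ℝ) ≤ Fintype.card V := by exact_mod_cast Finset.card_le_univ (S j)
    nlinarith [(Nat.cast_pos (α := ℝ)).2 (Fintype.card_pos (α := V))]
  have hgap : 1 - c / h < (c / 2) ^ ε := Real.lt_rpow_of_lt_logb (by positivity) (by linarith) hlog
  have hch : 0 < c / h := by
    linarith [Real.rpow_le_one (by positivity) (by linarith : c / 2 ≤ 1) hε.le]
  have hhalf : ((S j).card : ℝ) / 2 ≤ (((S j).filter fun x => ∃ v ∈ P, E v x).card : ℝ) := by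
    by_contra! hsmall
    set A := (S j).filter fun x => ¬ ∃ v ∈ P, E v x
    have hcard : (((S j).filter fun x => ∃ v ∈ P, E v x).card : ℝ) + A.card = (S j).card := by
      exact_mod_cast Finset.card_filter_add_card_filter_not _
    have hAP : CompleteTo E A P :=
      completeTo_filter_not_exists hT (Finset.disjoint_of_subset_right hP (hdisj j j' hjj'))
    obtain ⟨v, hv⟩ : P.Nonempty := by
      rw [← Finset.card_pos, ← Nat.cast_pos (α := ℝ)]
      exact (mul_pos hch (by exact_mod_cast one_le_trT)).trans_le hPsize
    have hAuniv : A ≠ Finset.univ := fun hA =>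
      Finset.disjoint_left.1 hAP.disjoint (hA ▸ Finset.mem_univ v) hv
    exact hgap.not_gt (hcrit.rpow_lt_one_sub_of_completeTo hε.le (by positivity)
      (by linarith) hAuniv ((htrans j' hwj').1.mono hP) hPsize hAP)
  exact ⟨hhalf, by linarith⟩

/-- In an ε-critical tournament with a smooth structure, if `w(j)=0`,
`w(j+1)=1` and `P ⊆ S_{j+1}` has `|P| ≥ (c/h)·tr(T)`, with
`ε < log_{c/2}(1-c/h)`, then at least half of `S_j` has an in-neighbour in
`P`. -/
theorem half_of_linear_set_beaten {V : Type*} [Fintype V] (E : V → V → Prop)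
    (hT : IsTournament E) (ε c lam h : ℝ) (hε : 0 < ε) (hc : 0 < c)
    (hcrit : IsCritical E ε) {m : ℕ} (w : Fin m → Bool) (S : Fin m → Finset V)
    (hS : SmoothStruct E c lam w S) (j j' : Fin m)
    (hjj : ((j' : ℕ)) = (j : ℕ) + 1) (hwj : w j = false) (hwj' : w j' = true)
    (P : Finset V) (hP : P ⊆ S j') (hh : 1 ≤ h)
    (hPsize : c / h * (trT E : ℝ) ≤ (P.card : ℝ))
    (hlog : ε < Real.logb (c / 2) (1 - c / h)) :
    ((S j).card : ℝ) / 2 ≤ (((S j).filter fun x => ∃ v ∈ P, E v x).card : ℝ) ∧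
    c / 2 * (Fintype.card V : ℝ) ≤
      (((S j).filter fun x => ∃ v ∈ P, E v x).card : ℝ) :=
  half_of_linear_set_beaten_general E hT ε c lam h hε hc hcrit w S hS j j' hwj hwj' P hP hPsize hlog
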